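/- Let F be a filter of a basic pseudo hoop M. Then F is prime if and only if any two filters F₁, F₂ containing F are comparable (F₁ ⊆ F₂ or F₂ ⊆ F₁). Consequently the set of prime filters of M forms a root system. -/

import Mathlib

universe u

structure PseudoHoop (M : Type u) where
  mul : M → M → M
  one : M
  imp : M → M → M
  rimp : M → M → M
  mul_one : ∀ x, mul x one = x
  one_mul : ∀ x, mul one x = x
  imp_self : ∀ x, imp x x = one
  rimp_self : ∀ x, rimp x x = one
  mul_imp : ∀ x y z, imp (mul x y) z = imp x (imp y z)
  mul_rimp : ∀ x y z, rimp (mul x y) z = rimp y (rimp x z)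
  div1 : ∀ x y, mul (imp x y) x = mul (imp y x) y
  div2 : ∀ x y, mul (imp x y) x = mul x (rimp x y)
  div3 : ∀ x y, mul x (rimp x y) = mul y (rimp y x)

namespace PseudoHoop

variable {M : Type u} (H : PseudoHoop M)

/-- The induced order: x ≤ y iff x → y = 1. -/
def le (x y : M) : Prop := H.imp x y = H.one

/-- The derived meet: x ∧ y = (x → y) ⊙ x. -/
def meet (x y : M) : M := H.mul (H.imp x y) x

/-- Powers: a^0 = 1, a^(n+1) = a^n ⊙ a. -/
def pow (a : M) : ℕ → M
  | 0 => H.one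
  | n + 1 => H.mul (pow a n) a

/-- j is the least upper bound of x and y. -/
def IsJoin (x y j : M) : Prop :=
  H.le x j ∧ H.le y j ∧ ∀ c, H.le x c → H.le y c → H.le j c

/-- Prelinearity: (x→y) ∨ (y→x) and (x⇝y) ∨ (y⇝x) exist and equal 1. -/
def Prelinear : Prop :=
  ∀ x y, H.IsJoin (H.imp x y) (H.imp y x) H.one ∧ H.IsJoin (H.rimp x y) (H.rimp y x) H.one

/-- Basic pseudo hoop. -/
def Basic : Prop :=
  (∀ x y z, H.le (H.imp (H.imp x y) z) (H.imp (H.imp (H.imp y x) z) z)) ∧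
  (∀ x y z, H.le (H.rimp (H.rimp x y) z) (H.rimp (H.rimp (H.rimp y x) z) z))

/-- Filters: contain 1, closed under ⊙ and upward closed. -/
def IsFilter (F : Set M) : Prop :=
  H.one ∈ F ∧ (∀ x ∈ F, ∀ y ∈ F, H.mul x y ∈ F) ∧ (∀ x ∈ F, ∀ y, H.le x y → y ∈ F)

/-- Filter generated by a set. -/
def filterGen (S : Set M) : Set M := ⋂₀ {F | H.IsFilter F ∧ S ⊆ F}

/-- Prime filter. -/
def IsPrime (F : Set M) : Prop :=
  H.IsFilter F ∧
    ∀ F₁ F₂, H.IsFilter F₁ → H.IsFilter F₂ → F₁ ∩ F₂ ⊆ F → F₁ ⊆ F ∨ F₂ ⊆ F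

/-- V is a value of g: a filter maximal with respect to not containing g. -/
def IsValueOf (V : Set M) (g : M) : Prop :=
  H.IsFilter V ∧ g ∉ V ∧ ∀ W, H.IsFilter W → V ⊆ W → g ∉ W → W = V

/-- V is a value of M: a value of some g ≠ 1. -/
def IsValue (V : Set M) : Prop := ∃ g, g ≠ H.one ∧ H.IsValueOf V g

end PseudoHoop

/-!
Write `u = a → b` and `v = b → a`. The basic axiom says `((u → z) ⊙ (v → z)) ≤ z` for every `z`,
and a double induction over the ways an element enters the filters generated by `F ∪ {u}` and by
`F ∪ {v}` turns this into `⟨F ∪ {u}⟩ ∩ ⟨F ∪ {v}⟩ ⊆ F`. Hence both primeness and comparability of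
the filters above `F` force `u ∈ F` or `v ∈ F`. Conversely, this dichotomy for all `a, b` makes `F`
prime and the filters above it comparable; a prime filter satisfies it, so the filters above a
prime filter, in particular the prime ones, form a chain.
-/

namespace PseudoHoop

variable {M : Type u} (H : PseudoHoop M)

/-- Facts about `⇝` are read off from facts about `→` in the dual. -/
def dual : PseudoHoop M where
  mul x y := H.mul y x
  one := H.one
  imp := H.rimp
  rimp := H.imp
  mul_one := H.one_mul
  one_mul := H.mul_one
  imp_self := H.rimp_self
  rimp_self := H.imp_self
  mul_imp x y z := H.mul_rimp y x z
  mul_rimp x y z := H.mul_imp y x z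
  div1 := H.div3
  div2 x y := (H.div2 x y).symm
  div3 := H.div1

theorem imp_one_imp (x y : M) : H.imp H.one (H.imp x y) = H.imp x y := by
  rw [← H.mul_imp, H.one_mul]

theorem imp_imp_one (x y : M) : H.imp (H.imp x y) H.one = H.one := by
  set w := H.imp x y
  have hw : H.mul (H.imp w H.one) w = w := by
    rw [H.div1, H.mul_one, H.imp_one_imp]
  calc H.imp w H.one = H.imp (H.mul (H.imp w H.one) w) H.one := by rw [hw]
    _ = H.imp (H.imp w H.one) (H.imp w H.one) := H.mul_imp _ _ _
    _ = H.one := H.imp_self _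

theorem le_refl (x : M) : H.le x x := H.imp_self x

theorem le_antisymm {a b : M} (hab : H.le a b) (hba : H.le b a) : a = b :=
  calc a = H.mul (H.imp a b) a := by rw [show H.imp a b = H.one from hab, H.one_mul]
    _ = H.mul (H.imp b a) b := H.div1 a b
    _ = b := by rw [show H.imp b a = H.one from hba, H.one_mul]

theorem one_imp (x : M) : H.imp H.one x = x := by
  have hmeet : H.imp H.one x = H.mul (H.imp x H.one) x := by
    rw [← H.div1, H.mul_one]
  refine H.le_antisymm ?_ ?_
  · show H.imp (H.imp H.one x) x = H.one
    rw [hmeet, H.mul_imp, H.imp_self, H.imp_imp_one]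
  · show H.imp x (H.imp H.one x) = H.one
    rw [← H.mul_imp, H.mul_one, H.imp_self]

theorem imp_one (x : M) : H.imp x H.one = H.one := by
  simpa only [H.one_imp] using H.imp_imp_one H.one x

theorem eq_one_of_one_le {x : M} (h : H.le H.one x) : x = H.one := by
  rwa [← H.one_imp x]

theorem le_trans {a b c : M} (hab : H.le a b) (hbc : H.le b c) : H.le a c := by
  have ha : a = H.mul (H.imp b a) b := by
    rw [← H.div1, show H.imp a b = H.one from hab, H.one_mul]
  show H.imp a c = H.one
  rw [ha, H.mul_imp, show H.imp b c = H.one from hbc, H.imp_one]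

theorem mul_le_iff_le_imp {x y z : M} : H.le (H.mul x y) z ↔ H.le x (H.imp y z) := by
  rw [le, le, H.mul_imp]

theorem imp_mul_le (a b : M) : H.le (H.mul (H.imp a b) a) b :=
  H.mul_le_iff_le_imp.mpr (H.le_refl _)

theorem mul_le_right (x y : M) : H.le (H.mul x y) y := by
  rw [le, H.mul_imp, H.imp_self, H.imp_one]

theorem imp_mono_right (a : M) {b c : M} (h : H.le b c) : H.le (H.imp a b) (H.imp a c) :=
  H.mul_le_iff_le_imp.mp (H.le_trans (H.imp_mul_le a b) h)

theorem dual_le_of_le {a b : M} (h : H.le a b) : H.dual.le a b := by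
  have ha : a = H.mul b (H.rimp b a) := by
    rw [← H.div3, ← H.div2, show H.imp a b = H.one from h, H.one_mul]
  show H.rimp a b = H.one
  rw [ha, H.mul_rimp, H.rimp_self]
  exact H.dual.imp_imp_one b a

theorem dual_le_iff {a b : M} : H.dual.le a b ↔ H.le a b :=
  ⟨H.dual.dual_le_of_le, H.dual_le_of_le⟩

theorem mul_le_iff_le_rimp {x y z : M} : H.le (H.mul x y) z ↔ H.le y (H.rimp x z) := by
  rw [← H.dual_le_iff, ← H.dual_le_iff]
  exact H.dual.mul_le_iff_le_imp

theorem mul_le_left (x y : M) : H.le (H.mul x y) x :=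
  H.dual_le_iff.mp (H.dual.mul_le_right y x)

theorem le_imp_self (z e : M) : H.le z (H.imp e z) :=
  H.mul_le_iff_le_imp.mp (H.mul_le_left z e)

theorem mul_le_mul_left (c : M) {a b : M} (h : H.le a b) : H.le (H.mul c a) (H.mul c b) :=
  H.mul_le_iff_le_rimp.mpr (H.le_trans h (H.mul_le_iff_le_rimp.mp (H.le_refl _)))

theorem mul_assoc (x y z : M) : H.mul (H.mul x y) z = H.mul x (H.mul y z) := by
  have himp : ∀ w, H.imp (H.mul (H.mul x y) z) w = H.imp (H.mul x (H.mul y z)) w := by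
    intro w
    simp only [H.mul_imp]
  refine H.le_antisymm ?_ ?_
  · rw [le, himp, H.imp_self]
  · rw [le, ← himp, H.imp_self]

variable {H} in
theorem Basic.imp_imp_mul_le (hB : H.Basic) (a b z : M) :
    H.le (H.mul (H.imp (H.imp a b) z) (H.imp (H.imp b a) z)) z :=
  H.mul_le_iff_le_imp.mpr (hB.1 a b z)

variable {H} in
theorem IsFilter.mem_of_mem_imp {F : Set M} (hF : H.IsFilter F) {a b : M} (ha : a ∈ F)
    (hab : H.imp a b ∈ F) : b ∈ F :=
  hF.2.2 _ (hF.2.1 _ hab _ ha) b (H.imp_mul_le a b)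

variable {H} in
theorem IsFilter.mem_of_mem_rimp {F : Set M} (hF : H.IsFilter F) {a b : M} (ha : a ∈ F)
    (hab : H.rimp a b ∈ F) : b ∈ F :=
  hF.2.2 _ (hF.2.1 _ ha _ hab) b (H.mul_le_iff_le_rimp.mpr (H.le_refl _))

theorem isFilter_filterGen (S : Set M) : H.IsFilter (H.filterGen S) :=
  ⟨fun _ hG => hG.1.1,
    fun x hx y hy G hG => hG.1.2.1 x (hx G hG) y (hy G hG),
    fun x hx y hxy G hG => hG.1.2.2 x (hx G hG) y hxy⟩

theorem subset_filterGen (S : Set M) : S ⊆ H.filterGen S :=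
  fun _ hx _ hG => hG.2 hx

theorem filterGen_subset {S G : Set M} (hG : H.IsFilter G) (hSG : S ⊆ G) : H.filterGen S ⊆ G :=
  fun _ hx => hx G ⟨hG, hSG⟩

/-- An inductive description of `filterGen S`. -/
inductive InClosure (S : Set M) : M → Prop
  | one : InClosure S H.one
  | mp {e z : M} : e ∈ S → InClosure S (H.imp e z) → InClosure S z

namespace InClosure

variable {H} {S : Set M}

theorem of_le {z x : M} (hz : H.InClosure S z) (hzx : H.le z x) : H.InClosure S x := by
  induction hz generalizing x with
  | one => rw [H.eq_one_of_one_le hzx]; exact one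
  | mp he _ ih => exact mp he (ih (H.imp_mono_right _ hzx))

theorem of_mem {e : M} (he : e ∈ S) : H.InClosure S e :=
  mp he (by rw [H.imp_self]; exact one)

theorem mul {x y : M} (hx : H.InClosure S x) (hy : H.InClosure S y) :
    H.InClosure S (H.mul x y) := by
  induction hy with
  | one => rwa [H.mul_one]
  | @mp e y he _ ih =>
    refine mp he (ih.of_le (H.mul_le_iff_le_imp.mp ?_))
    rw [H.mul_assoc]
    exact H.mul_le_mul_left x (H.imp_mul_le e y)

end InClosure

theorem isFilter_inClosure (S : Set M) : H.IsFilter {x | H.InClosure S x} :=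
  ⟨.one, fun _ hx _ hy => hx.mul hy, fun _ hx _ hxy => hx.of_le hxy⟩

theorem filterGen_subset_inClosure (S : Set M) : H.filterGen S ⊆ {x | H.InClosure S x} :=
  H.filterGen_subset (H.isFilter_inClosure S) fun _ => .of_mem

/-- The induction runs over the pair of derivations, lexicographically; the common upper bound `x`
lets each step replace the target by `e → x` without leaving the induction. -/
theorem mem_of_inClosure_insert {F : Set M} (hF : H.IsFilter F) {u v : M}
    (huv : ∀ z, H.le (H.mul (H.imp u z) (H.imp v z)) z) {z w : M}
    (hz : H.InClosure (insert u F) z) (hw : H.InClosure (insert v F) w) :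
    ∀ x, H.le z x → H.le w x → x ∈ F := by
  induction hz generalizing w with
  | one => intro x hx _; rw [H.eq_one_of_one_le hx]; exact hF.1
  | @mp e z he hz' ihz =>
    rcases he with rfl | he
    · induction hw with
      | one => intro x _ hx; rw [H.eq_one_of_one_le hx]; exact hF.1
      | @mp d w hd hw' ihw =>
        intro x hzx hwx
        have hdx : H.imp d x ∈ F :=
          ihw (H.imp d x) (H.le_trans hzx (H.le_imp_self x d)) (H.imp_mono_right d hwx)
        rcases hd with rfl | hd
        · have hex : H.imp e x ∈ F := ihz (.mp (.inl rfl) hw') (H.imp e x)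
            (H.imp_mono_right e hzx) (H.le_trans hwx (H.le_imp_self x e))
          exact hF.2.2 _ (hF.2.1 _ hex _ hdx) x (huv x)
        · exact hF.mem_of_mem_imp hd hdx
    · intro x hzx hwx
      exact hF.mem_of_mem_imp he
        (ihz hw (H.imp e x) (H.imp_mono_right e hzx) (H.le_trans hwx (H.le_imp_self x e)))

theorem filterGen_insert_inter_subset {F : Set M} (hF : H.IsFilter F) {u v : M}
    (huv : ∀ z, H.le (H.mul (H.imp u z) (H.imp v z)) z) :
    H.filterGen (insert u F) ∩ H.filterGen (insert v F) ⊆ F := fun x ⟨hxu, hxv⟩ =>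
  H.mem_of_inClosure_insert hF huv (H.filterGen_subset_inClosure _ hxu)
    (H.filterGen_subset_inClosure _ hxv) x (H.le_refl x) (H.le_refl x)

/-- The quotient of `M` by `F` is a chain exactly when this holds. -/
def IsLinear (F : Set M) : Prop := ∀ a b : M, H.imp a b ∈ F ∨ H.imp b a ∈ F

theorem isLinear_of_prime (hB : H.Basic) {F : Set M} (hF : H.IsFilter F)
    (hprime : ∀ F₁ F₂ : Set M, H.IsFilter F₁ → H.IsFilter F₂ → F₁ ∩ F₂ ⊆ F →
      F₁ ⊆ F ∨ F₂ ⊆ F) :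
    H.IsLinear F := by
  intro a b
  have hmem : ∀ g, g ∈ H.filterGen (insert g F) := fun g =>
    H.subset_filterGen _ (Set.mem_insert g F)
  rcases hprime _ _ (H.isFilter_filterGen _) (H.isFilter_filterGen _)
      (H.filterGen_insert_inter_subset hF (hB.imp_imp_mul_le a b)) with h | h
  · exact .inl (h (hmem _))
  · exact .inr (h (hmem _))

theorem isLinear_of_comparable (hB : H.Basic) {F : Set M} (hF : H.IsFilter F)
    (hcomp : ∀ F₁ F₂ : Set M, H.IsFilter F₁ → H.IsFilter F₂ → F ⊆ F₁ → F ⊆ F₂ →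
      F₁ ⊆ F₂ ∨ F₂ ⊆ F₁) :
    H.IsLinear F := by
  intro a b
  have hinter := H.filterGen_insert_inter_subset hF (hB.imp_imp_mul_le a b)
  have hmem : ∀ g, g ∈ H.filterGen (insert g F) := fun g =>
    H.subset_filterGen _ (Set.mem_insert g F)
  have hsub : ∀ g, F ⊆ H.filterGen (insert g F) := fun g =>
    (Set.subset_insert g F).trans (H.subset_filterGen _)
  rcases hcomp _ _ (H.isFilter_filterGen _) (H.isFilter_filterGen _) (hsub _) (hsub _) with h | h
  · exact .inl (hinter ⟨hmem _, h (hmem _)⟩)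
  · exact .inr (hinter ⟨h (hmem _), hmem _⟩)

/-- The element `(a → b) ⇝ b` lies above both `a` and `b`, so it falls into `F₁ ∩ F₂`. -/
theorem mem_of_imp_mem_of_inter_subset {F F₁ F₂ : Set M} (hF : H.IsFilter F)
    (h₁ : H.IsFilter F₁) (h₂ : H.IsFilter F₂) (hsub : F₁ ∩ F₂ ⊆ F) {a b : M} (ha : a ∈ F₁)
    (hb : b ∈ F₂) (hab : H.imp a b ∈ F) : b ∈ F := by
  have hjoin : H.rimp (H.imp a b) b ∈ F :=
    hsub ⟨h₁.2.2 a ha _ (H.mul_le_iff_le_rimp.mp (H.imp_mul_le a b)),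
      h₂.2.2 b hb _ (H.mul_le_iff_le_rimp.mp (H.mul_le_right _ b))⟩
  exact hF.mem_of_mem_rimp hab hjoin

theorem prime_of_isLinear {F : Set M} (hF : H.IsFilter F) (hlin : H.IsLinear F)
    (F₁ F₂ : Set M) (h₁ : H.IsFilter F₁) (h₂ : H.IsFilter F₂) (hsub : F₁ ∩ F₂ ⊆ F) :
    F₁ ⊆ F ∨ F₂ ⊆ F := by
  refine or_iff_not_imp_left.mpr fun hF₁ => ?_
  obtain ⟨a, ha, haF⟩ := Set.not_subset.mp hF₁
  intro b hb
  rcases hlin a b with hab | hba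
  · exact H.mem_of_imp_mem_of_inter_subset hF h₁ h₂ hsub ha hb hab
  · exact absurd (H.mem_of_imp_mem_of_inter_subset hF h₂ h₁
      ((Set.inter_comm F₂ F₁).subset.trans hsub) hb ha hba) haF

theorem comparable_of_isLinear {F : Set M} (hlin : H.IsLinear F) (F₁ F₂ : Set M)
    (h₁ : H.IsFilter F₁) (h₂ : H.IsFilter F₂) (hF₁ : F ⊆ F₁) (hF₂ : F ⊆ F₂) :
    F₁ ⊆ F₂ ∨ F₂ ⊆ F₁ := by
  refine or_iff_not_imp_left.mpr fun h₁₂ => ?_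
  obtain ⟨a, ha₁, ha₂⟩ := Set.not_subset.mp h₁₂
  intro b hb₂
  rcases hlin a b with hab | hba
  · exact h₁.mem_of_mem_imp ha₁ (hF₁ hab)
  · exact absurd (h₂.mem_of_mem_imp hb₂ (hF₂ hba)) ha₂

end PseudoHoop

theorem basicPseudoHoop_prime_iff_comparable {M : Type u} (H : PseudoHoop M)
    (hB : H.Basic) (F : Set M) (hF : H.IsFilter F) :
    ((∀ F₁ F₂ : Set M, H.IsFilter F₁ → H.IsFilter F₂ → F₁ ∩ F₂ ⊆ F → F₁ ⊆ F ∨ F₂ ⊆ F) ↔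
      (∀ F₁ F₂ : Set M, H.IsFilter F₁ → H.IsFilter F₂ → F ⊆ F₁ → F ⊆ F₂ →
        F₁ ⊆ F₂ ∨ F₂ ⊆ F₁)) ∧
    (∀ P Q R : Set M, H.IsPrime P → H.IsPrime Q → H.IsPrime R → P ⊆ Q → P ⊆ R →
      Q ⊆ R ∨ R ⊆ Q) :=
  ⟨⟨fun hprime => H.comparable_of_isLinear (H.isLinear_of_prime hB hF hprime),
      fun hcomp => H.prime_of_isLinear hF (H.isLinear_of_comparable hB hF hcomp)⟩,
    fun _ _ _ hP hQ hR => H.comparable_of_isLinear (H.isLinear_of_prime hB hP.1 hP.2) _ _ hQ.1 hR.1⟩
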